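/- arXiv:math/0210281 — 4 statements merged into one kernel-verified Lean document; each statement's English description precedes it below -/
import Mathlib

section
/- Let $(C_i, \pi)$ be an inverse system of cochain complexes of $W$-modules such that each complex $C_i$ is acyclic (has zero cohomology in all degrees). Suppose there exists $m \geq 0$ such that for every $i$ and every $x \in C_i$, there exists $y \in C_{i+1}$ with $\pi(y) = p^m x$. Then for every $n$, the transition map on cohomology $H(\varprojlim^n C_\bullet) \to H(\varprojlim^{n+m} C_\bullet)$ of twisted inverse limit complexes is the zero map; consequently $\varinjlim_n H(\varprojlim^n C_\bullet) = 0$. -/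
/-!
Lemma 1 of Kim–Hain (key step): for an inverse system of acyclic cochain complexes whose
transition maps are `p^m`-surjective, the transition map
`H(lim^n C) → H(lim^{n+m} C)` of twisted inverse limits is zero, and hence
`colim_n H(lim^n C) = 0`.  Complexes are non-negatively graded, presented as families
`C i q` (level `i`, degree `q`) with differentials `d` and transition maps `π`.
Cohomological assertions are expressed elementwise (cocycles and coboundaries).
-/

variable {W : Type*} [CommRing W]

/-- The `m`-twisted inverse limit of an inverse system of `W`-modules. -/
def twLim (p : ℕ) {L : ℕ → Type*} [∀ i, AddCommGroup (L i)] [∀ i, Module W (L i)]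
    (π : ∀ i, L (i + 1) →ₗ[W] L i) (m : ℕ) : Submodule W (∀ i, L i) where
  carrier := {a | ∀ i, π i (a (i + 1)) = p ^ m • a i}
  add_mem' := by
    intro a b ha hb i
    simp only [Pi.add_apply, map_add, ha i, hb i, smul_add]
  zero_mem' := by intro i; simp
  smul_mem' := by
    intro c a ha i
    simp only [Pi.smul_apply, map_smul, ha i]
    rw [smul_comm]


private lemma mem_twLim_iff (p : ℕ) {L : ℕ → Type*} [∀ i, AddCommGroup (L i)]
    [∀ i, Module W (L i)] (π : ∀ i, L (i + 1) →ₗ[W] L i) (m : ℕ) (a : ∀ i, L i) :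
    a ∈ twLim (W := W) p π m ↔ ∀ i, π i (a (i + 1)) = p ^ m • a i := Iff.rfl

private lemma exists_g {L : ℕ → Type*} [∀ i, AddCommGroup (L i)] [∀ i, Module W (L i)]
    (π : ∀ i, L (i + 1) →ₗ[W] L i) (p m n : ℕ)
    (hsurj : ∀ i (x : L i), ∃ y, π i y = p ^ m • x) (f : ∀ i, L i) :
    ∃ g : ∀ i, L i, g 0 = 0 ∧
      ∀ i, π i (g (i + 1)) = p ^ (n + m) • g i - p ^ (m * (i + 1)) • f i := by
  have H : ∀ i (x : L i), ∃ y : L (i + 1),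
      π i y = p ^ (n + m) • x - p ^ (m * (i + 1)) • f i := by
    intro i x
    obtain ⟨y, hy⟩ := hsurj i (p ^ n • x - p ^ (m * i) • f i)
    refine ⟨y, ?_⟩
    rw [hy, smul_sub, smul_smul, smul_smul, ← pow_add, ← pow_add]
    congr 2 <;> ring
  refine ⟨fun i => Nat.rec 0 (fun i gi => (H i gi).choose) i, rfl, fun i => ?_⟩
  exact (H i _).choose_spec

/-- Let `(Cᵢ, π)` be an inverse system of cochain complexes of `W`-modules
with each `Cᵢ` acyclic, and suppose there is `m` such that each `x` at level `i` satisfies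
`π y = p^m • x` for some `y` at level `i+1`.  Then the transition map
`H(lim^n C) → H(lim^{n+m} C)` is zero in every degree (in positive degrees every twisted
cocycle maps to a coboundary, in degree `0` it maps to zero), and consequently
`colim_n H(lim^n C) = 0`. -/
theorem statement1 (p : ℕ) (hp : p.Prime) (m : ℕ)
    (C : ℕ → ℕ → Type*) [∀ i q, AddCommGroup (C i q)] [∀ i q, Module W (C i q)]
    (d : ∀ i q, C i q →ₗ[W] C i (q + 1))
    (π : ∀ i q, C (i + 1) q →ₗ[W] C i q)
    (hdd : ∀ i q x, d i (q + 1) (d i q x) = 0)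
    (hπd : ∀ i q x, d i q (π i q x) = π i (q + 1) (d (i + 1) q x))
    -- each level is acyclic: zero cohomology in all degrees
    (hacy₀ : ∀ i (x : C i 0), d i 0 x = 0 → x = 0)
    (hacy : ∀ i q (x : C i (q + 1)), d i (q + 1) x = 0 → ∃ y, d i q y = x)
    -- the transition maps are `p^m`-surjective
    (hsurj : ∀ i q (x : C i q), ∃ y, π i q y = p ^ m • x) :
    -- the transition map `H(lim^n) → H(lim^{n+m})` is zero:
    (∀ n q, ∀ a ∈ twLim (W := W) p (fun i => π i (q + 1)) n,
        (∀ i, d i (q + 1) (a i) = 0) →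
        ∃ b ∈ twLim (W := W) p (fun i => π i q) (n + m),
          ∀ i, d i q (b i) = p ^ (m * i) • a i)
    ∧ (∀ n, ∀ a ∈ twLim (W := W) p (fun i => π i 0) n,
        (∀ i, d i 0 (a i) = 0) → ∀ i, p ^ (m * i) • a i = 0)
    -- consequently `colim_n H(lim^n C) = 0`:
    ∧ (∀ n q, ∀ a ∈ twLim (W := W) p (fun i => π i (q + 1)) n,
        (∀ i, d i (q + 1) (a i) = 0) →
        ∃ n', n ≤ n' ∧ ∃ b ∈ twLim (W := W) p (fun i => π i q) n',
          ∀ i, d i q (b i) = p ^ ((n' - n) * i) • a i)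
    ∧ (∀ n, ∀ a ∈ twLim (W := W) p (fun i => π i 0) n,
        (∀ i, d i 0 (a i) = 0) →
        ∃ n', n ≤ n' ∧ ∀ i, p ^ ((n' - n) * i) • a i = 0) := by
  have key : ∀ n q, ∀ a ∈ twLim (W := W) p (fun i => π i (q + 1)) n,
      (∀ i, d i (q + 1) (a i) = 0) →
      ∃ b ∈ twLim (W := W) p (fun i => π i q) (n + m),
        ∀ i, d i q (b i) = p ^ (m * i) • a i := by
    intro n q a ha hcoc
    rw [mem_twLim_iff] at ha
    choose c hc using fun i => hacy i q (a i) (hcoc i)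
    set e : ∀ i, C i q := fun i => π i q (c (i + 1)) - p ^ n • c i with he_def
    have hde : ∀ i, d i q (e i) = 0 := by
      intro i
      simp only [he_def, map_sub, map_nsmul, hπd, hc, ha i, sub_self]
    cases q with
    | zero =>
      refine ⟨fun i => p ^ (m * i) • c i, ?_, ?_⟩
      · rw [mem_twLim_iff]
        intro i
        have he0 : e i = 0 := hacy₀ i (e i) (hde i)
        have hπc : π i 0 (c (i + 1)) = p ^ n • c i := by
          have := sub_eq_zero.mp he0
          simpa [he_def] using this
        rw [map_nsmul, hπc, smul_smul, smul_smul, ← pow_add, ← pow_add]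
        congr 2; ring
      · intro i; rw [map_nsmul, hc]
    | succ r =>
      choose f hf using fun i => hacy i r (e i) (hde i)
      obtain ⟨g, hg0, hgrec⟩ := exists_g (fun i => π i r) p m n (fun i x => hsurj i r x) f
      refine ⟨fun i => p ^ (m * i) • c i + d i r (g i), ?_, ?_⟩
      · rw [mem_twLim_iff]
        intro i
        have hπc : π i (r + 1) (c (i + 1)) = p ^ n • c i + e i := by
          simp [he_def]
        rw [map_add, map_nsmul, hπc, ← hπd, hgrec i, ← hf, map_sub, map_nsmul,
          map_nsmul, smul_add]
        rw [smul_add, smul_smul, smul_smul, ← pow_add, ← pow_add,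
          show m * (i + 1) + n = n + m + m * i by ring]
        abel
      · intro i
        rw [map_add, map_nsmul, hc, hdd, add_zero]
  refine ⟨key, ?_, ?_, ?_⟩
  · intro n a ha hcoc i
    rw [hacy₀ i (a i) (hcoc i), smul_zero]
  · intro n q a ha hcoc
    obtain ⟨b, hb, hbd⟩ := key n q a ha hcoc
    exact ⟨n + m, Nat.le_add_right _ _, b, hb, by simpa [Nat.add_sub_cancel_left] using hbd⟩
  · intro n a ha hcoc
    exact ⟨n, le_refl _, fun i => by rw [hacy₀ i (a i) (hcoc i), smul_zero]⟩
end

section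
/- Let $f: L_\bullet \to K_\bullet$ be a map of inverse systems of cochain complexes of $W$-modules which is a quasi-isomorphism at each level $i$. Suppose both systems satisfy: there is $m$ such that for each $i$ and each element $x$ at level $i$ there is $y$ at level $i+1$ with $\pi(y) = p^m x$. Then the induced map $\varinjlim_n \varprojlim^n L_\bullet \to \varinjlim_n \varprojlim^n K_\bullet$ on infinitely-twisted inverse limits is a quasi-isomorphism. -/
/-!
Lemma 1 of Kim–Hain: a levelwise quasi-isomorphism of inverse systems of complexes with
`p^m`-surjective transition maps induces a quasi-isomorphism on the infinitely twisted
inverse limits `colim_n lim^n`.  Quasi-isomorphism assertions are expressed elementwise: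
bijectivity on cohomology classes (surjectivity up to coboundary, injectivity up to
coboundary), both levelwise (hypothesis) and on the colimit of twisted limits (conclusion),
where an element of the colimit is represented by a twisted sequence at some stage `n`, and
two representatives are identified after applying the connecting maps
`(aᵢ) ↦ (p^((n'-n)·i) • aᵢ)`.
-/

variable {W : Type*} [CommRing W]

/-- Bottom-degree correction lemma: if cycles in `M1` vanish, any levelwise preimage of a
twisted compatible family of boundaries is automatically compatible. -/
theorem star0 (p n : ℕ) {M1 M2 : ℕ → Type*}
    [∀ i, AddCommGroup (M1 i)] [∀ i, Module W (M1 i)]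
    [∀ i, AddCommGroup (M2 i)] [∀ i, Module W (M2 i)]
    (π1 : ∀ i, M1 (i + 1) →ₗ[W] M1 i) (π2 : ∀ i, M2 (i + 1) →ₗ[W] M2 i)
    (d1 : ∀ i, M1 i →ₗ[W] M2 i)
    (hπd1 : ∀ i x, d1 i (π1 i x) = π2 i (d1 (i + 1) x))
    (hinj : ∀ i (z : M1 i), d1 i z = 0 → z = 0)
    (b : ∀ i, M2 i) (hb : ∀ i, π2 i (b (i + 1)) = p ^ n • b i)
    (he : ∀ i, ∃ e, d1 i e = b i) :
    ∃ e' : ∀ i, M1 i, (∀ i, π1 i (e' (i + 1)) = p ^ n • e' i) ∧ ∀ i, d1 i (e' i) = b i := by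
  choose e he' using he
  refine ⟨e, fun i => ?_, he'⟩
  have hz : d1 i (π1 i (e (i + 1)) - p ^ n • e i) = 0 := by
    rw [map_sub, map_nsmul, hπd1, he', he', hb, sub_self]
  have := hinj i _ hz
  rwa [sub_eq_zero] at this

/-- Main correction lemma: a twisted compatible family of levelwise boundaries becomes,
after increasing the twist by `m`, an actual boundary in the twisted limit, provided the
transition maps are `p^m`-surjective one degree lower and cycles are boundaries there. -/
theorem star (p n m : ℕ) {M0 M1 M2 : ℕ → Type*}
    [∀ i, AddCommGroup (M0 i)] [∀ i, Module W (M0 i)]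
    [∀ i, AddCommGroup (M1 i)] [∀ i, Module W (M1 i)]
    [∀ i, AddCommGroup (M2 i)] [∀ i, Module W (M2 i)]
    (π0 : ∀ i, M0 (i + 1) →ₗ[W] M0 i) (π1 : ∀ i, M1 (i + 1) →ₗ[W] M1 i)
    (π2 : ∀ i, M2 (i + 1) →ₗ[W] M2 i)
    (d0 : ∀ i, M0 i →ₗ[W] M1 i) (d1 : ∀ i, M1 i →ₗ[W] M2 i)
    (hπd0 : ∀ i x, d0 i (π0 i x) = π1 i (d0 (i + 1) x))
    (hπd1 : ∀ i x, d1 i (π1 i x) = π2 i (d1 (i + 1) x))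
    (hdd : ∀ i x, d1 i (d0 i x) = 0)
    (hsurj : ∀ i (x : M0 i), ∃ y, π0 i y = p ^ m • x)
    (hacy : ∀ i (z : M1 i), d1 i z = 0 → ∃ s, d0 i s = z)
    (b : ∀ i, M2 i) (hb : ∀ i, π2 i (b (i + 1)) = p ^ n • b i)
    (he : ∀ i, ∃ e, d1 i e = b i) :
    ∃ e' : ∀ i, M1 i, (∀ i, π1 i (e' (i + 1)) = p ^ (n + m) • e' i) ∧
      ∀ i, d1 i (e' i) = p ^ (m * i) • b i := by
  choose e he' using he
  set z : ∀ i, M1 i := fun i => π1 i (e (i + 1)) - p ^ n • e i with hzdef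
  have hz : ∀ i, d1 i (z i) = 0 := by
    intro i
    rw [hzdef]
    simp only [map_sub, map_nsmul, hπd1, he', hb, sub_self]
  choose s hs using fun i => hacy i (z i) (hz i)
  choose lift hlift using hsurj
  have haex : ∃ a : ∀ i, M0 i,
      ∀ i, π0 i (a (i + 1)) = p ^ m • (p ^ n • a i + p ^ (m * i) • s i) := by
    refine ⟨fun i => Nat.rec (motive := fun i => M0 i) 0
      (fun i ai => lift i (p ^ n • ai + p ^ (m * i) • s i)) i, fun i => ?_⟩
    exact hlift i _
  obtain ⟨a, ha⟩ := haex
  refine ⟨fun i => p ^ (m * i) • e i - d0 i (a i), fun i => ?_, fun i => ?_⟩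
  · show π1 i (p ^ (m * (i + 1)) • e (i + 1) - d0 (i + 1) (a (i + 1)))
      = p ^ (n + m) • (p ^ (m * i) • e i - d0 i (a i))
    have hπe : π1 i (e (i + 1)) = z i + p ^ n • e i := by
      rw [hzdef]; exact (sub_add_cancel _ _).symm
    rw [map_sub, map_nsmul, hπe, ← hπd0, ha]
    rw [map_nsmul, map_add, map_nsmul, map_nsmul, hs]
    have h1 : (p : ℕ) ^ (m * (i + 1)) • z i = p ^ m • p ^ (m * i) • z i := by
      rw [smul_smul, ← pow_add, Nat.mul_add_one, add_comm (m * i) m]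
    have h2 : (p : ℕ) ^ (m * (i + 1)) • p ^ n • e i
        = p ^ (n + m) • p ^ (m * i) • e i := by
      have hmn : m * (i + 1) + n = n + m + (m * i) := by ring
      rw [smul_smul, smul_smul, ← pow_add, ← pow_add, hmn, pow_add, ← smul_smul]
    have h4 : (p : ℕ) ^ m • (p ^ n • d0 i (a i) + p ^ (m * i) • z i)
        = p ^ (n + m) • d0 i (a i) + p ^ m • p ^ (m * i) • z i := by
      rw [smul_add, smul_smul, ← pow_add, add_comm m n]
    rw [smul_add, h1, h2, h4]
    simp only [smul_sub]
    abel
  · show d1 i (p ^ (m * i) • e i - d0 i (a i)) = p ^ (m * i) • b i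
    rw [map_sub, map_nsmul, he', hdd, sub_zero]
set_option maxHeartbeats 2000000 in
/-- Let `f : L → K` be a map of inverse systems of cochain complexes of
`W`-modules which is a quasi-isomorphism at each level, and assume both systems have
`p^m`-surjective transition maps.  Then the induced map
`colim_n lim^n L → colim_n lim^n K` is a quasi-isomorphism. -/
theorem statement2 (p : ℕ) (hp : p.Prime) (m : ℕ)
    (L K : ℕ → ℕ → Type*)
    [∀ i q, AddCommGroup (L i q)] [∀ i q, Module W (L i q)]
    [∀ i q, AddCommGroup (K i q)] [∀ i q, Module W (K i q)]
    (dL : ∀ i q, L i q →ₗ[W] L i (q + 1)) (dK : ∀ i q, K i q →ₗ[W] K i (q + 1))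
    (πL : ∀ i q, L (i + 1) q →ₗ[W] L i q) (πK : ∀ i q, K (i + 1) q →ₗ[W] K i q)
    (f : ∀ i q, L i q →ₗ[W] K i q)
    (hddL : ∀ i q x, dL i (q + 1) (dL i q x) = 0)
    (hddK : ∀ i q x, dK i (q + 1) (dK i q x) = 0)
    (hπdL : ∀ i q x, dL i q (πL i q x) = πL i (q + 1) (dL (i + 1) q x))
    (hπdK : ∀ i q x, dK i q (πK i q x) = πK i (q + 1) (dK (i + 1) q x))
    -- `f` is a map of inverse systems of complexes
    (hfd : ∀ i q x, f i (q + 1) (dL i q x) = dK i q (f i q x))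
    (hfπ : ∀ i q x, f i q (πL i q x) = πK i q (f (i + 1) q x))
    -- `f` is a quasi-isomorphism at each level:
    (hqis_surj : ∀ i q (y : K i (q + 1)), dK i (q + 1) y = 0 →
        ∃ x, dL i (q + 1) x = 0 ∧ ∃ c, f i (q + 1) x = y + dK i q c)
    (hqis_surj₀ : ∀ i (y : K i 0), dK i 0 y = 0 →
        ∃ x, dL i 0 x = 0 ∧ f i 0 x = y)
    (hqis_inj : ∀ i q (x : L i (q + 1)), dL i (q + 1) x = 0 →
        (∃ c, f i (q + 1) x = dK i q c) → ∃ c, x = dL i q c)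
    (hqis_inj₀ : ∀ i (x : L i 0), dL i 0 x = 0 → f i 0 x = 0 → x = 0)
    -- both systems have `p^m`-surjective transition maps:
    (hsurjL : ∀ i q (x : L i q), ∃ y, πL i q y = p ^ m • x)
    (hsurjK : ∀ i q (x : K i q), ∃ y, πK i q y = p ^ m • x) :
    -- surjectivity on cohomology of the colimit of twisted limits, positive degrees:
    (∀ n q, ∀ b ∈ twLim (W := W) p (fun i => πK i (q + 1)) n,
        (∀ i, dK i (q + 1) (b i) = 0) →
        ∃ n', n ≤ n' ∧ ∃ a ∈ twLim (W := W) p (fun i => πL i (q + 1)) n',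
          (∀ i, dL i (q + 1) (a i) = 0) ∧
          ∃ c ∈ twLim (W := W) p (fun i => πK i q) n',
            ∀ i, f i (q + 1) (a i) = p ^ ((n' - n) * i) • b i + dK i q (c i))
    -- surjectivity in degree 0:
    ∧ (∀ n, ∀ b ∈ twLim (W := W) p (fun i => πK i 0) n,
        (∀ i, dK i 0 (b i) = 0) →
        ∃ n', n ≤ n' ∧ ∃ a ∈ twLim (W := W) p (fun i => πL i 0) n',
          (∀ i, dL i 0 (a i) = 0) ∧ ∀ i, f i 0 (a i) = p ^ ((n' - n) * i) • b i)
    -- injectivity on cohomology, positive degrees: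
    ∧ (∀ n q, ∀ a ∈ twLim (W := W) p (fun i => πL i (q + 1)) n,
        (∀ i, dL i (q + 1) (a i) = 0) →
        (∃ n', n ≤ n' ∧ ∃ c ∈ twLim (W := W) p (fun i => πK i q) n',
            ∀ i, p ^ ((n' - n) * i) • f i (q + 1) (a i) = dK i q (c i)) →
        ∃ n'', n ≤ n'' ∧ ∃ e ∈ twLim (W := W) p (fun i => πL i q) n'',
          ∀ i, dL i q (e i) = p ^ ((n'' - n) * i) • a i)
    -- injectivity in degree 0:
    ∧ (∀ n, ∀ a ∈ twLim (W := W) p (fun i => πL i 0) n,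
        (∀ i, dL i 0 (a i) = 0) →
        (∃ n', n ≤ n' ∧ ∀ i, p ^ ((n' - n) * i) • f i 0 (a i) = 0) →
        ∃ n'', n ≤ n'' ∧ ∀ i, p ^ ((n'' - n) * i) • a i = 0) := by
  classical
  have coneAcyZero : ∀ i (x : L i (0 + 1)) (y : K i 0), dL i (0 + 1) x = 0 →
      f i (0 + 1) x + dK i 0 y = 0 →
      ∃ u : L i 0, dL i 0 u = -x ∧ f i 0 u = y := by
    intro i x y hx hxy
    obtain ⟨c, hc⟩ := hqis_inj i 0 x hx
      ⟨-y, by rw [map_neg]; exact (neg_eq_of_add_eq_zero_left hxy).symm⟩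
    have hcy : dK i 0 (y - f i 0 (-c)) = 0 := by
      simp only [map_neg, map_sub, ← hfd, ← hc]
      rw [sub_neg_eq_add]
      exact (add_comm _ _).trans hxy
    obtain ⟨x2, hx2, hfx2⟩ := hqis_surj₀ i _ hcy
    refine ⟨-c + x2, by rw [map_add, map_neg, ← hc, hx2, add_zero], ?_⟩
    simp only [map_add, map_neg, hfx2]
    abel
  have coneAcySucc : ∀ i q (x : L i (q + 1 + 1)) (y : K i (q + 1)), dL i (q + 1 + 1) x = 0 →
      f i (q + 1 + 1) x + dK i (q + 1) y = 0 →
      ∃ (u : L i (q + 1)) (v : K i q), dL i (q + 1) u = -x ∧ f i (q + 1) u + dK i q v = y := by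
    intro i q x y hx hxy
    obtain ⟨c, hc⟩ := hqis_inj i (q + 1) x hx
      ⟨-y, by rw [map_neg]; exact (neg_eq_of_add_eq_zero_left hxy).symm⟩
    have hcy : dK i (q + 1) (y - f i (q + 1) (-c)) = 0 := by
      simp only [map_neg, map_sub, ← hfd, ← hc]
      rw [sub_neg_eq_add]
      exact (add_comm _ _).trans hxy
    obtain ⟨x2, hx2, c2, hfx2⟩ := hqis_surj i q _ hcy
    refine ⟨-c + x2, -c2, by rw [map_add, map_neg, ← hc, hx2, add_zero], ?_⟩
    simp only [map_add, map_neg, hfx2]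
    abel
  refine ⟨?_, ?_, ?_, ?_⟩
  · -- Goal 1: surjectivity in positive degrees
    intro n q b hb hcyc
    have hb' : ∀ i, πK i (q + 1) (b (i + 1)) = p ^ n • b i := hb
    obtain ⟨D1, hD1⟩ : ∃ D : ∀ i, (L i (q + 1) × K i q) →ₗ[W] (L i (q + 1 + 1) × K i (q + 1)),
        D = fun i => LinearMap.prod
          ((-(dL i (q + 1))) ∘ₗ (LinearMap.fst W (L i (q + 1)) (K i q)))
          (((f i (q + 1)) ∘ₗ (LinearMap.fst W (L i (q + 1)) (K i q)))
            + ((dK i q) ∘ₗ (LinearMap.snd W (L i (q + 1)) (K i q)))) := ⟨_, rfl⟩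
    obtain ⟨P1, hP1⟩ : ∃ P : ∀ i, (L (i + 1) (q + 1) × K (i + 1) q) →ₗ[W] (L i (q + 1) × K i q),
        P = fun i => (πL i (q + 1)).prodMap (πK i q) := ⟨_, rfl⟩
    obtain ⟨P2, hP2⟩ : ∃ P : ∀ i, (L (i + 1) (q + 1 + 1) × K (i + 1) (q + 1)) →ₗ[W]
          (L i (q + 1 + 1) × K i (q + 1)),
        P = fun i => (πL i (q + 1 + 1)).prodMap (πK i (q + 1)) := ⟨_, rfl⟩
    have hπd1 : ∀ i x, D1 i (P1 i x) = P2 i (D1 (i + 1) x) := by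
      rintro i ⟨x, y⟩
      simp [hD1, hP1, hP2, hπdL, hfπ, hπdK]
    have hbb : ∀ i, P2 i ((0, b (i + 1)) : L (i + 1) (q + 1 + 1) × K (i + 1) (q + 1))
        = p ^ n • (((0 : L i (q + 1 + 1)), b i)) := by
      intro i
      simp [hP2, hb' i]
    have he : ∀ i, ∃ ev, D1 i ev = (((0 : L i (q + 1 + 1)), b i)) := by
      intro i
      obtain ⟨u, v, hu, huv⟩ := coneAcySucc i q 0 (b i) (map_zero _)
        (by rw [map_zero, zero_add]; exact hcyc i)
      exact ⟨(u, v), by simp [hD1, hu, huv]⟩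
    have key : ∃ e' : ∀ i, L i (q + 1) × K i q,
        (∀ i, P1 i (e' (i + 1)) = p ^ (n + m) • e' i) ∧
        ∀ i, D1 i (e' i) = p ^ (m * i) • (((0 : L i (q + 1 + 1)), b i)) := by
      rcases q with _ | q0
      · -- q = 0 : correct in cone degree -1, which is L _ 0
        refine star p n m (fun i => πL i 0) P1 P2
          (fun i => LinearMap.prod (-(dL i 0)) (f i 0)) D1
          ?_ hπd1 ?_ (fun i x => hsurjL i 0 x) ?_ _ hbb he
        · intro i x
          simp [hP1, hπdL, hfπ]
        · intro i x
          simp [hD1, hddL, hfd]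
        · rintro i ⟨x, y⟩ hz
          rw [hD1] at hz
          simp only [LinearMap.prod_apply, Function.prod, LinearMap.coe_comp, Function.comp_apply,
            LinearMap.fst_apply, LinearMap.snd_apply, LinearMap.neg_apply, LinearMap.add_apply,
            Prod.mk_eq_zero, neg_eq_zero] at hz
          obtain ⟨u, hu, huv⟩ := coneAcyZero i x y hz.1 hz.2
          exact ⟨u, by simp [hu, huv]⟩
      · -- q = q0 + 1 : correct in cone degree q - 1
        refine star p n m (fun i => (πL i (q0 + 1)).prodMap (πK i q0)) P1 P2
          (fun i => LinearMap.prod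
            ((-(dL i (q0 + 1))) ∘ₗ (LinearMap.fst W (L i (q0 + 1)) (K i q0)))
            (((f i (q0 + 1)) ∘ₗ (LinearMap.fst W (L i (q0 + 1)) (K i q0)))
              + ((dK i q0) ∘ₗ (LinearMap.snd W (L i (q0 + 1)) (K i q0))))) D1
          ?_ hπd1 ?_ ?_ ?_ _ hbb he
        · rintro i ⟨x, y⟩
          simp [hP1, hπdL, hfπ, hπdK]
        · rintro i ⟨x, y⟩
          simp [hD1, hddL, hddK, hfd]
        · rintro i ⟨x, y⟩
          obtain ⟨u, hu⟩ := hsurjL i (q0 + 1) x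
          obtain ⟨v, hv⟩ := hsurjK i q0 y
          exact ⟨(u, v), by simp [hu, hv]⟩
        · rintro i ⟨x, y⟩ hz
          rw [hD1] at hz
          simp only [LinearMap.prod_apply, Function.prod, LinearMap.coe_comp, Function.comp_apply,
            LinearMap.fst_apply, LinearMap.snd_apply, LinearMap.neg_apply, LinearMap.add_apply,
            Prod.mk_eq_zero, neg_eq_zero] at hz
          obtain ⟨u, v, hu, huv⟩ := coneAcySucc i q0 x y hz.1 hz.2
          exact ⟨(u, v), by simp [hu, huv]⟩
    obtain ⟨e', hcom, hde⟩ := key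
    have hcom1 : ∀ i, πL i (q + 1) ((e' (i + 1)).1) = p ^ (n + m) • (e' i).1 := by
      intro i
      have h := congrArg Prod.fst (hcom i)
      simpa [hP1] using h
    have hcom2 : ∀ i, πK i q ((e' (i + 1)).2) = p ^ (n + m) • (e' i).2 := by
      intro i
      have h := congrArg Prod.snd (hcom i)
      simpa [hP1] using h
    have hde1 : ∀ i, dL i (q + 1) ((e' i).1) = 0 := by
      intro i
      have h := congrArg Prod.fst (hde i)
      simpa [hD1] using h
    have hde2 : ∀ i, f i (q + 1) ((e' i).1) + dK i q ((e' i).2) = p ^ (m * i) • b i := by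
      intro i
      have h := congrArg Prod.snd (hde i)
      simpa [hD1] using h
    refine ⟨n + m, Nat.le_add_right n m, fun i => (e' i).1, hcom1, hde1,
      fun i => -(e' i).2, fun i => ?_, fun i => ?_⟩
    · show πK i q (-(e' (i + 1)).2) = p ^ (n + m) • (-(e' i).2)
      rw [map_neg, hcom2 i, smul_neg]
    · have hmn : n + m - n = m := by omega
      rw [hmn, map_neg, ← hde2 i]
      abel
  · -- Goal 2: surjectivity in degree 0
    intro n b hb hcyc
    choose x hx1 hx2 using fun i => hqis_surj₀ i (b i) (hcyc i)
    have hcompat : ∀ i, πL i 0 (x (i + 1)) = p ^ n • x i := by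
      intro i
      have h1 : dL i 0 (πL i 0 (x (i + 1)) - p ^ n • x i) = 0 := by
        rw [map_sub, map_nsmul, hπdL, hx1, hx1, map_zero, smul_zero, sub_zero]
      have h2 : f i 0 (πL i 0 (x (i + 1)) - p ^ n • x i) = 0 := by
        rw [map_sub, map_nsmul, hfπ, hx2, hx2, hb i, sub_self]
      have := hqis_inj₀ i _ h1 h2
      rwa [sub_eq_zero] at this
    refine ⟨n, le_rfl, x, hcompat, hx1, fun i => ?_⟩
    rw [hx2, Nat.sub_self, Nat.zero_mul, pow_zero, one_smul]
  · -- Goal 3: injectivity in positive degrees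
    rintro n q a ha hcyca ⟨n', hnn', c, hc, hdc⟩
    have ha' : ∀ i, πL i (q + 1) (a (i + 1)) = p ^ n • a i := ha
    have hc' : ∀ i, πK i q (c (i + 1)) = p ^ n' • c i := hc
    obtain ⟨P2, hP2⟩ : ∃ P : ∀ i, (L (i + 1) (q + 1) × K (i + 1) q) →ₗ[W] (L i (q + 1) × K i q),
        P = fun i => (πL i (q + 1)).prodMap (πK i q) := ⟨_, rfl⟩
    have hexp : ∀ i : ℕ, (n' - n) * (i + 1) + n = n' + (n' - n) * i := by
      intro i
      rw [Nat.mul_succ, add_assoc, Nat.sub_add_cancel hnn']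
      exact Nat.add_comm _ _
    have hbg : ∀ i, P2 i ((p ^ ((n' - n) * (i + 1)) • a (i + 1), -(c (i + 1))) :
          L (i + 1) (q + 1) × K (i + 1) q)
        = p ^ n' • ((p ^ ((n' - n) * i) • a i, -(c i)) : L i (q + 1) × K i q) := by
      intro i
      have h1 : πL i (q + 1) (p ^ ((n' - n) * (i + 1)) • a (i + 1))
          = p ^ n' • p ^ ((n' - n) * i) • a i := by
        rw [map_nsmul, ha' i, smul_smul, smul_smul, ← pow_add, ← pow_add, hexp i]
      have h2 : πK i q (-(c (i + 1))) = p ^ n' • (-(c i)) := by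
        rw [map_neg, hc' i, smul_neg]
      simp [hP2, h1, h2]
    rcases q with _ | q1
    · -- q = 0 : correct in cone degree -1, which is L _ 0, using `star0`
      obtain ⟨e', hcom, hde⟩ := star0 p n' (fun i => πL i 0) P2
        (fun i => LinearMap.prod (-(dL i 0)) (f i 0))
        (by intro i x; simp [hP2, hπdL, hfπ])
        (by intro i z hz
            simp only [LinearMap.prod_apply, Function.prod, LinearMap.neg_apply,
              Prod.mk_eq_zero, neg_eq_zero] at hz
            exact hqis_inj₀ i z hz.1 hz.2)
        (fun i => (p ^ ((n' - n) * i) • a i, -(c i))) hbg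
        (by intro i
            obtain ⟨u, hu, huv⟩ := coneAcyZero i (p ^ ((n' - n) * i) • a i) (-(c i))
              (by rw [map_nsmul, hcyca i, smul_zero])
              (by rw [map_nsmul, map_neg, hdc i, add_neg_cancel])
            exact ⟨u, by simp [Prod.ext_iff, hu, huv]⟩)
      refine ⟨n', hnn', fun i => -(e' i), fun i => ?_, fun i => ?_⟩
      · show πL i 0 (-(e' (i + 1))) = p ^ n' • (-(e' i))
        rw [map_neg, hcom i, smul_neg]
      · have h1 : -(dL i 0 (e' i)) = p ^ ((n' - n) * i) • a i := by
          simpa using congrArg Prod.fst (hde i)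
        rw [map_neg]
        exact h1
    · -- q = q1 + 1 : correct in cone degrees q - 1 and q - 2 using `star`
      obtain ⟨D1g, hD1g⟩ : ∃ D : ∀ i, (L i (q1 + 1) × K i q1) →ₗ[W]
            (L i (q1 + 1 + 1) × K i (q1 + 1)),
          D = fun i => LinearMap.prod
            ((-(dL i (q1 + 1))) ∘ₗ (LinearMap.fst W (L i (q1 + 1)) (K i q1)))
            (((f i (q1 + 1)) ∘ₗ (LinearMap.fst W (L i (q1 + 1)) (K i q1)))
              + ((dK i q1) ∘ₗ (LinearMap.snd W (L i (q1 + 1)) (K i q1)))) := ⟨_, rfl⟩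
      obtain ⟨P1g, hP1g⟩ : ∃ P : ∀ i, (L (i + 1) (q1 + 1) × K (i + 1) q1) →ₗ[W]
            (L i (q1 + 1) × K i q1),
          P = fun i => (πL i (q1 + 1)).prodMap (πK i q1) := ⟨_, rfl⟩
      have hπd1g : ∀ i x, D1g i (P1g i x) = P2 i (D1g (i + 1) x) := by
        rintro i ⟨x, y⟩
        simp [hD1g, hP1g, hP2, hπdL, hfπ, hπdK]
      have heg : ∀ i, ∃ ev, D1g i ev
          = ((p ^ ((n' - n) * i) • a i, -(c i)) : L i (q1 + 1 + 1) × K i (q1 + 1)) := by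
        intro i
        obtain ⟨u, v, hu, huv⟩ := coneAcySucc i q1 (p ^ ((n' - n) * i) • a i) (-(c i))
          (by rw [map_nsmul, hcyca i, smul_zero])
          (by rw [map_nsmul, map_neg, hdc i, add_neg_cancel])
        exact ⟨(u, v), by simp [hD1g, hu, huv]⟩
      have key : ∃ e' : ∀ i, L i (q1 + 1) × K i q1,
          (∀ i, P1g i (e' (i + 1)) = p ^ (n' + m) • e' i) ∧
          ∀ i, D1g i (e' i)
            = p ^ (m * i) • ((p ^ ((n' - n) * i) • a i, -(c i)) : _) := by
        rcases q1 with _ | q2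
        · refine star p n' m (fun i => πL i 0) P1g P2
            (fun i => LinearMap.prod (-(dL i 0)) (f i 0)) D1g
            ?_ hπd1g ?_ (fun i x => hsurjL i 0 x) ?_ _ hbg heg
          · intro i x
            simp [hP1g, hπdL, hfπ]
          · intro i x
            simp [hD1g, hddL, hfd]
          · rintro i ⟨x, y⟩ hz
            rw [hD1g] at hz
            simp only [LinearMap.prod_apply, Function.prod, LinearMap.coe_comp, Function.comp_apply,
              LinearMap.fst_apply, LinearMap.snd_apply, LinearMap.neg_apply, LinearMap.add_apply,
              Prod.mk_eq_zero, neg_eq_zero] at hz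
            obtain ⟨u, hu, huv⟩ := coneAcyZero i x y hz.1 hz.2
            exact ⟨u, by simp [hu, huv]⟩
        · refine star p n' m (fun i => (πL i (q2 + 1)).prodMap (πK i q2)) P1g P2
            (fun i => LinearMap.prod
              ((-(dL i (q2 + 1))) ∘ₗ (LinearMap.fst W (L i (q2 + 1)) (K i q2)))
              (((f i (q2 + 1)) ∘ₗ (LinearMap.fst W (L i (q2 + 1)) (K i q2)))
                + ((dK i q2) ∘ₗ (LinearMap.snd W (L i (q2 + 1)) (K i q2))))) D1g
            ?_ hπd1g ?_ ?_ ?_ _ hbg heg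
          · rintro i ⟨x, y⟩
            simp [hP1g, hπdL, hfπ, hπdK]
          · rintro i ⟨x, y⟩
            simp [hD1g, hddL, hddK, hfd]
          · rintro i ⟨x, y⟩
            obtain ⟨u, hu⟩ := hsurjL i (q2 + 1) x
            obtain ⟨v, hv⟩ := hsurjK i q2 y
            exact ⟨(u, v), by simp [hu, hv]⟩
          · rintro i ⟨x, y⟩ hz
            rw [hD1g] at hz
            simp only [LinearMap.prod_apply, Function.prod, LinearMap.coe_comp, Function.comp_apply,
              LinearMap.fst_apply, LinearMap.snd_apply, LinearMap.neg_apply, LinearMap.add_apply,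
              Prod.mk_eq_zero, neg_eq_zero] at hz
            obtain ⟨u, v, hu, huv⟩ := coneAcySucc i q2 x y hz.1 hz.2
            exact ⟨(u, v), by simp [hu, huv]⟩
      obtain ⟨e', hcom, hde⟩ := key
      refine ⟨n' + m, le_trans hnn' (Nat.le_add_right n' m),
        fun i => -(e' i).1, fun i => ?_, fun i => ?_⟩
      · show πL i (q1 + 1) (-(e' (i + 1)).1) = p ^ (n' + m) • (-(e' i).1)
        have h := congrArg Prod.fst (hcom i)
        simp only [hP1g, LinearMap.prodMap_apply, Prod.smul_fst] at h
        rw [map_neg, h, smul_neg]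
      · have h1 : -(dL i (q1 + 1) ((e' i).1)) = p ^ (m * i) • p ^ ((n' - n) * i) • a i := by
          have h := congrArg Prod.fst (hde i)
          simpa [hD1g] using h
        have hE : (n' + m - n) * i = m * i + (n' - n) * i := by
          rw [← Nat.add_mul]
          congr 1
          omega
        rw [hE, pow_add, mul_smul, map_neg]
        exact h1
  · -- Goal 4: injectivity in degree 0
    rintro n a ha hcyc ⟨n', hnn', hzero⟩
    refine ⟨n', hnn', fun i => ?_⟩
    refine hqis_inj₀ i _ (by rw [map_nsmul, hcyc i, smul_zero]) ?_
    rw [map_nsmul]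
    exact hzero i
end

section
/- Let $X/S$ be a smooth scheme with a Frobenius lift, and let $F: \Omega^i_{X^{(1)}/S^{(1)}} \to \Omega^i_{X/S}$ be the divided Frobenius ($\phi/p^i$ in degree $i$). If $x \in \Omega^i_{X^{(1)}/S^{(1)}}$ and $F(x)$ is divisible by $p^m$, then $x$ is divisible by $p^m$. More generally, if $x \in \Omega^i_{X^{(n)}/S^{(n)}}$ and $F^n(x)$ is divisible by $p^m$, then $x$ is divisible by $p^m$. -/
/-!
Statement 6: divisibility lifts along the divided Frobenius.  Abstract setting: for each
Frobenius-twist level `n` we have `p`-torsion-free modules `N n` (degree `i-1`) and `M n`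
(degree `i`), a differential `dM : N n → M n`, divided Frobenii `F : M (n+1) → M n` and
`FN : N (n+1) → N n` with `d ∘ F = p • F ∘ d`, satisfying the Cartier-type injectivity:
`F x ∈ p^k M + d N  →  x ∈ p^k M + p • d N`.  Then `F x` divisible by `p^m` implies `x`
divisible by `p^m`, and likewise for the `n`-fold composite `F^n`.
-/

variable {W : Type*} [CommRing W]

variable (M N : ℕ → Type*) [∀ n, AddCommGroup (M n)] [∀ n, Module W (M n)]
  [∀ n, AddCommGroup (N n)] [∀ n, Module W (N n)]

/-- The `n`-fold composite of the divided Frobenius, `F^n : M n → M 0`. -/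
def Fpow (F : ∀ n, M (n + 1) →ₗ[W] M n) : ∀ n, M n →ₗ[W] M 0
  | 0 => LinearMap.id
  | (n + 1) => (Fpow F n).comp (F n)

/-- If `F(x)` is divisible by `p^m` then so is `x`; more generally if
`F^n(x)` is divisible by `p^m` then so is `x`. -/
theorem statement6 (p : ℕ) (hp : p.Prime)
    (F : ∀ n, M (n + 1) →ₗ[W] M n) (FN : ∀ n, N (n + 1) →ₗ[W] N n)
    (dM : ∀ n, N n →ₗ[W] M n)
    -- `p`-torsion-freeness
    (htfM : ∀ n (x : M n), p • x = 0 → x = 0)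
    (htfN : ∀ n (x : N n), p • x = 0 → x = 0)
    -- compatibility of the divided Frobenius with the differential: `d F = p • F d`
    (hdF : ∀ n (y : N (n + 1)), dM n (FN n y) = p • F n (dM (n + 1) y))
    -- Cartier-type injectivity (for every modulus `p^k`, at every pair of levels):
    (hCartier : ∀ n (k : ℕ), 1 ≤ k → ∀ x : M (n + 1),
        (∃ u v, F n x = p ^ k • u + dM n v) →
        ∃ u v, x = p ^ k • u + p • dM (n + 1) v) :
    (∀ (m : ℕ) (x : M 1), (∃ z, F 0 x = p ^ m • z) → ∃ z, x = p ^ m • z)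
    ∧ (∀ (n m : ℕ) (x : M n),
        (∃ z, Fpow (W := W) M F n x = p ^ m • z) → ∃ z, x = p ^ m • z) := by
  have key : ∀ (m n : ℕ) (x : M (n + 1)), (∃ z, F n x = p ^ m • z) → ∃ z, x = p ^ m • z := by
    intro m
    induction m with
    | zero => intro n x _; exact ⟨x, by simp⟩
    | succ m ih =>
      intro n x ⟨z, hz⟩
      obtain ⟨u, v, hx⟩ := hCartier n (m + 1) (by omega) x ⟨z, 0, by simp [hz]⟩
      have h1 : F n x = p ^ (m + 1) • F n u + p • F n (dM (n + 1) v) := by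
        rw [hx, map_add, map_nsmul, map_nsmul]
      have h3 : p • F n (dM (n + 1) v) = p ^ (m + 1) • z - p ^ (m + 1) • F n u := by
        rw [← hz, h1]; abel
      have hpm : p * p ^ m = p ^ (m + 1) := by ring
      have h2 : p • (F n (dM (n + 1) v) - p ^ m • (z - F n u)) = 0 := by
        rw [smul_sub, smul_smul, hpm, smul_sub, h3]; abel
      have h4 : F n (dM (n + 1) v) = p ^ m • (z - F n u) :=
        sub_eq_zero.mp (htfM n _ h2)
      obtain ⟨t, ht⟩ := ih n (dM (n + 1) v) ⟨z - F n u, h4⟩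
      refine ⟨u + t, ?_⟩
      rw [hx, ht, smul_smul, hpm, smul_add]
  constructor
  · exact fun m x h => key m 0 x h
  · intro n
    induction n with
    | zero => intro m x ⟨z, hz⟩; exact ⟨z, hz⟩
    | succ n ihn =>
      intro m x ⟨z, hz⟩
      obtain ⟨z', hz'⟩ := ihn m (F n x) ⟨z, hz⟩
      exact key m n x ⟨z', hz'⟩
end

section
/- Let $A$ be a complete discrete valuation ring with perfect residue field $k$ of characteristic $p$, Witt ring $W = W(k)$, and uniformizer $\pi$ giving a presentation $A \cong W[t]/(f(t))$ with $f$ Eisenstein of degree $e$. Let $R$ be the $p$-adic completion of the divided power envelope of the ideal $(f(t), p)$ in $W[t]$, and $\sigma: W\langle\langle t\rangle\rangle \to W\langle\langle t\rangle\rangle$ the Frobenius ($\sigma$ on $W$, $t \mapsto t^p$). If $p^r \geq e$, then $\sigma^r: W\langle\langle t\rangle\rangle \to W\langle\langle t\rangle\rangle$ factors through the natural map $g: R \to W\langle\langle t\rangle\rangle$, i.e. there is a map $W\langle\langle t\rangle\rangle \to R$ whose composite with $g$ is $\sigma^r$. -/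
/-!
Statement 14: with `A = W[t]/(f)` for an Eisenstein polynomial `f` of degree `e` over the
Witt vectors `W = W(k)`, let `W⟨⟨t⟩⟩` be the `p`-adic completion of the divided power
polynomial algebra and `R` the `p`-adic completion of the divided power envelope of
`(f(t), p) ⊆ W[t]` (equivalently, of the ideal `(t^e)`).  If `p^r ≥ e`, the Frobenius
`σ^r` of `W⟨⟨t⟩⟩` (`σ` on `W`, `t ↦ t^p`) factors through the natural map
`g : R → W⟨⟨t⟩⟩`.

Concretely, both rings are realized as subrings of `K[[t]]`, `K = Frac(W)`:
`W⟨⟨t⟩⟩ = {Σ (aₙ/n!) tⁿ : aₙ ∈ W, aₙ → 0 p-adically}` (since `t^[n] = tⁿ/n!`) and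
`R = {Σ (bₙ/⌊n/e⌋!) tⁿ : bₙ ∈ W, bₙ → 0 p-adically}` (since `(t^e)^[m] = t^{em}/m!`);
`g` is the inclusion `R ⊆ W⟨⟨t⟩⟩`, and `σ` is characterized on coefficients by
`σ(Σ cₙ tⁿ) = Σ φ(cₙ) t^{pn}` with `φ` the Witt vector Frobenius extended to `K`.
-/

open PowerSeries

/-- `p`-adic convergence to `0` of a sequence of Witt vectors. -/
def PNull (p : ℕ) [hp : Fact p.Prime] {k : Type*} [CommRing k]
    (a : ℕ → WittVector p k) : Prop :=
  ∀ m : ℕ, ∃ N, ∀ n ≥ N, ∃ b, a n = (p : WittVector p k) ^ m * b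

theorem statement14 (p : ℕ) [hp : Fact p.Prime]
    (k : Type*) [Field k] [CharP k p] [PerfectRing k p]
    [IsDomain (WittVector p k)]
    -- `K = Frac(W)` and the Frobenius `φ` of `W` extended to `K`:
    (φK : FractionRing (WittVector p k) →+* FractionRing (WittVector p k))
    (hφK : ∀ a : WittVector p k,
      φK (algebraMap _ _ a) = algebraMap _ _ (WittVector.frobenius a))
    -- the Eisenstein polynomial `f` of degree `e ≥ 1`:
    (f : Polynomial (WittVector p k)) (e : ℕ) (he : 1 ≤ e)
    (hmon : f.Monic) (hdeg : f.natDegree = e)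
    (hEis : f.IsEisensteinAt (Ideal.span {(p : WittVector p k)}))
    -- `T = W⟨⟨t⟩⟩` as a subring of `K[[t]]`:
    (T : Subring (PowerSeries (FractionRing (WittVector p k))))
    (hT : ∀ F, F ∈ T ↔ ∃ a : ℕ → WittVector p k, PNull p a ∧
      ∀ n, (coeff n) F = algebraMap _ _ (a n) / (n.factorial : FractionRing (WittVector p k)))
    -- `R`, the completed divided power envelope of `(f, p) = (t^e, p)`, as a subring:
    (R : Subring (PowerSeries (FractionRing (WittVector p k))))
    (hR : ∀ F, F ∈ R ↔ ∃ b : ℕ → WittVector p k, PNull p b ∧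
      ∀ n, (coeff n) F = algebraMap _ _ (b n) / ((n / e).factorial : FractionRing (WittVector p k)))
    -- the natural map `g : R → W⟨⟨t⟩⟩` is the inclusion:
    (hRT : (R : Set (PowerSeries (FractionRing (WittVector p k)))) ⊆ T)
    -- the Frobenius `σ` of `W⟨⟨t⟩⟩`: `σ` on coefficients, `t ↦ t^p`:
    (σT : T →+* T)
    (hσT : ∀ (x : T) (n : ℕ),
      (coeff n) (σT x : PowerSeries (FractionRing (WittVector p k))) =
        if p ∣ n then φK ((coeff (n / p)) (x : PowerSeries (FractionRing (WittVector p k))))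
        else 0)
    -- if `p^r ≥ e` then `σ^r` factors through `g : R → W⟨⟨t⟩⟩`:
    (r : ℕ) (hr : e ≤ p ^ r) :
    ∃ h : T →+* R, ∀ x : T,
      ((h x : R) : PowerSeries (FractionRing (WittVector p k))) =
        (((⇑σT)^[r] x : T) : PowerSeries (FractionRing (WittVector p k))) := by

  classical
  -- Notation
  have hppos : 0 < p := hp.out.pos
  -- `W` has characteristic zero
  have hWchar : CharZero (WittVector p k) := by
    refine charZero_of_inj_zero fun n h0 => ?_
    by_contra hn
    have hpne : (p : WittVector p k) ≠ 0 := WittVector.p_nonzero p k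
    set v := n.factorization p with hv
    set u := n / p ^ v with hu
    have hmul : p ^ v * u = n := Nat.ordProj_mul_ordCompl_eq_self n p
    have hpu : ¬ p ∣ u := Nat.not_dvd_ordCompl hp.out hn
    have huk : ((u : k)) ≠ 0 := by
      intro h
      exact hpu ((CharP.cast_eq_zero_iff k p u).mp h)
    have huW : ((u : WittVector p k)) ≠ 0 := by
      intro h
      apply huk
      have := congrArg (WittVector.constantCoeff : WittVector p k →+* k) h
      simpa using this
    have : ((n : WittVector p k)) ≠ 0 := by
      rw [← hmul]
      push_cast
      exact mul_ne_zero (pow_ne_zero _ hpne) huW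
    exact this h0
  have hKchar : CharZero (FractionRing (WittVector p k)) :=
    charZero_of_injective_algebraMap (IsFractionRing.injective (WittVector p k) _)
  have hfac : ∀ n : ℕ, ((n.factorial : FractionRing (WittVector p k))) ≠ 0 := fun n =>
    Nat.cast_ne_zero.mpr n.factorial_ne_zero
  -- iterates of `φK`
  have hφ0 : ∀ s : ℕ, (⇑φK)^[s] (0 : FractionRing (WittVector p k)) = 0 := fun s =>
    Function.iterate_fixed (map_zero φK) s
  have hφnat : ∀ (s m : ℕ), (⇑φK)^[s] ((m : FractionRing (WittVector p k))) = m := fun s m =>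
    Function.iterate_fixed (map_natCast φK m) s
  have hφiter : ∀ (s : ℕ) (a : WittVector p k),
      (⇑φK)^[s] (algebraMap _ _ a) =
        algebraMap (WittVector p k) (FractionRing (WittVector p k))
          ((⇑(WittVector.frobenius : WittVector p k →+* WittVector p k))^[s] a) := by
    intro s
    induction s with
    | zero => intro a; simp
    | succ s ih =>
      intro a
      rw [Function.iterate_succ_apply, hφK, ih, ← Function.iterate_succ_apply]
  have hφdiv : ∀ (s : ℕ) (u v : FractionRing (WittVector p k)),
      (⇑φK)^[s] (u / v) = (⇑φK)^[s] u / (⇑φK)^[s] v := by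
    intro s
    induction s with
    | zero => intro u v; simp
    | succ s ih =>
      intro u v
      rw [Function.iterate_succ_apply, Function.iterate_succ_apply,
        Function.iterate_succ_apply, map_div₀, ih]
  -- iterates of the Witt frobenius commute with multiplication by `p ^ m`
  have hfrobp : ∀ (s m : ℕ) (c : WittVector p k),
      (⇑(WittVector.frobenius : WittVector p k →+* WittVector p k))^[s]
          ((p : WittVector p k) ^ m * c) =
        (p : WittVector p k) ^ m *
          (⇑(WittVector.frobenius : WittVector p k →+* WittVector p k))^[s] c := by
    intro s
    induction s with
    | zero => intro m c; simp
    | succ s ih =>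
      intro m c
      rw [Function.iterate_succ_apply, map_mul, map_pow, map_natCast, ih,
        ← Function.iterate_succ_apply]
  -- the coefficients of iterates of `σT`
  have key : ∀ (s : ℕ) (x : T) (n : ℕ),
      (coeff n) (((⇑σT)^[s] x : T) : PowerSeries (FractionRing (WittVector p k))) =
        if p ^ s ∣ n then
          (⇑φK)^[s] ((coeff (n / p ^ s)) (x : PowerSeries (FractionRing (WittVector p k))))
        else 0 := by
    intro s
    induction s with
    | zero => intro x n; simp
    | succ s ih =>
      intro x n
      rw [Function.iterate_succ_apply, ih (σT x) n]
      by_cases h1 : p ^ s ∣ n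
      · rw [if_pos h1, hσT x (n / p ^ s)]
        by_cases h2 : p ∣ n / p ^ s
        · have hdd : p ^ (s + 1) ∣ n := by
            have := (Nat.dvd_div_iff_mul_dvd h1).mp h2
            rwa [← pow_succ] at this
          rw [if_pos h2, if_pos hdd, Nat.div_div_eq_div_mul, ← pow_succ,
            ← Function.iterate_succ_apply]
        · have hnd : ¬ p ^ (s + 1) ∣ n := by
            intro hc
            exact h2 ((Nat.dvd_div_iff_mul_dvd h1).mpr (by rwa [pow_succ] at hc))
          rw [if_neg h2, if_neg hnd, hφ0]
      · rw [if_neg h1, if_neg fun hc => h1 (dvd_trans (pow_dvd_pow p s.le_succ) hc)]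
  -- the image of `σT^[r]` lies in `R`
  have mem : ∀ x : T,
      (((⇑σT)^[r] x : T) : PowerSeries (FractionRing (WittVector p k))) ∈ R := by
    intro x
    obtain ⟨a, haN, hac⟩ := (hT (x : PowerSeries (FractionRing (WittVector p k)))).mp x.2
    refine (hR _).mpr ⟨fun n => if p ^ r ∣ n then
        (⇑(WittVector.frobenius : WittVector p k →+* WittVector p k))^[r] (a (n / p ^ r)) *
          (((n / e).factorial / (n / p ^ r).factorial : ℕ) : WittVector p k)
      else 0, ?_, ?_⟩
    · intro m
      obtain ⟨N, hN⟩ := haN m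
      refine ⟨p ^ r * N, fun n hn => ?_⟩
      by_cases hd : p ^ r ∣ n
      · have hge : N ≤ n / p ^ r := by
          rw [Nat.le_div_iff_mul_le (pow_pos hppos r)]
          calc N * p ^ r = p ^ r * N := Nat.mul_comm _ _
          _ ≤ n := hn
        obtain ⟨c, hc⟩ := hN _ hge
        refine ⟨(⇑(WittVector.frobenius : WittVector p k →+* WittVector p k))^[r] c *
          (((n / e).factorial / (n / p ^ r).factorial : ℕ) : WittVector p k), ?_⟩
        simp only [if_pos hd]
        rw [hc, hfrobp, mul_assoc]
      · exact ⟨0, by simp only [if_neg hd]; rw [mul_zero]⟩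
    · intro n
      rw [key r x n]
      by_cases hd : p ^ r ∣ n
      · have hme : n / p ^ r ≤ n / e := Nat.div_le_div_left hr he
        have hdf : (n / p ^ r).factorial ∣ (n / e).factorial :=
          Nat.factorial_dvd_factorial hme
        simp only [if_pos hd]
        rw [hac (n / p ^ r), hφdiv, hφiter, hφnat, map_mul,
          map_natCast, Nat.cast_div hdf (hfac _)]
        rw [mul_div_assoc, div_right_comm, div_self (hfac _), one_div, div_eq_mul_inv]
      · simp only [if_neg hd]
        rw [map_zero, zero_div]
  -- assemble the ring hom
  have hpow : ∀ x : T, (σT ^ r) x = (⇑σT)^[r] x := fun x => by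
    rw [hom_coe_pow (fun (f : T →+* T) => ⇑f) rfl (fun _ _ => rfl) σT r]
  refine ⟨((T.subtype.comp (σT ^ r)).codRestrict R fun x => by
      simpa [hpow] using mem x), fun x => ?_⟩
  show ((T.subtype.comp (σT ^ r)) x) = _
  simp [hpow]
end
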